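/- Let A ∈ ℂ^{n×n}, b ∈ ℂ^n, and V ∈ ℂ^{n×n̂} with V^H V = I_{n̂}; set Â = V^H A V, b̂ = V^H b. Let λ_1, ..., λ_m ∈ ℂ lie neither in σ(A) nor in σ(Â), let κ_0, κ_1, ..., κ_m be nonnegative integers, and assume the range of V contains A^j b for 0 ≤ j ≤ κ_0 − 1 and (λ_k I − A)^{−j} b for 1 ≤ j ≤ κ_k, 1 ≤ k ≤ m. Fix t ∈ ℝ and suppose there are coefficients g_{jk}(t) ∈ ℂ such that the rational function r_t(λ) = Σ_{k=1}^m Σ_{j=1}^{κ_k} g_{jk}(t)/(λ_k − λ)^j + Σ_{j=0}^{κ_0−1} g_{j0}(t) λ^j satisfies r_t^{(j)}(μ̂) = t^j e^{t μ̂} for every eigenvalue μ̂ of Â and every 0 ≤ j ≤ ŵ(μ̂) − 1, where ŵ(μ̂) is the algebraic multiplicity of μ̂. Then r_t(A) b = V exp(t·Â) b̂, where r_t(A) := Σ_{k=1}^m Σ_{j=1}^{κ_k} g_{jk}(t) ((λ_k I − A)^{−1})^j + Σ_{j=0}^{κ_0−1} g_{j0}(t) A^j. -/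

import Mathlib

/-
Galerkin projection is exact on the range of `V`: if `V Vᴴ u = u`, then
`Vᴴ (B u) = (Vᴴ B V) (Vᴴ u)`. Applied inductively to the vectors `A ^ j b` and `(λₖ - A)⁻ʲ b`,
which lie in the range of `V`, this gives `r_t(A) b = V r_t(Â) b̂`; it remains to show
`r_t(Â) = exp(t Â)`.

It suffices to compare both sides on generalized eigenvectors `x`, `(Â - μ) ^ w x = 0` with `w`
the algebraic multiplicity of `μ`: these span, by the coprime factorization of the characteristic
polynomial. On such an `x`, a function `f` smooth at `μ` acts through its Taylor polynomial at `μ`,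
evaluated at `Â - μ` and read modulo `X ^ w`. By the Leibniz rule, Taylor polynomials modulo `X ^ w`
multiply like the functions themselves; this identifies the action with `Âⁱ x` for powers, with
`(λ - Â)⁻ⁱ x` for resolvent powers (the Taylor polynomial of `(λ - s)⁻ⁱ` inverts that of
`(λ - s)ⁱ`), and, summing the exponential series, with `exp(t Â) x`. The interpolation conditions
say precisely that `r_t` and `exp_t` have the same Taylor polynomials modulo `X ^ w` at every
eigenvalue.
-/

open Matrix Polynomial Finset
open scoped Nat

noncomputable abbrev modXPow (R : Type*) [CommRing R] (w : ℕ) :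
    R[X] →+* R[X] ⧸ Ideal.span {(X : R[X]) ^ w} :=
  Ideal.Quotient.mk _

theorem modXPow_eq_modXPow_iff {R : Type*} [CommRing R] {w : ℕ} {p q : R[X]} :
    modXPow R w p = modXPow R w q ↔ ∀ d < w, p.coeff d = q.coeff d := by
  simp only [modXPow, Ideal.Quotient.eq, Ideal.mem_span_singleton, X_pow_dvd_iff, coeff_sub,
    sub_eq_zero]

theorem aeval_mulVec_eq_of_modXPow_eq {R ι : Type*} [CommRing R] [Fintype ι] [DecidableEq ι]
    {N : Matrix ι ι R} {w : ℕ} {x : ι → R} (hx : (N ^ w) *ᵥ x = 0) {p q : R[X]}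
    (hpq : modXPow R w p = modXPow R w q) : aeval N p *ᵥ x = aeval N q *ᵥ x := by
  obtain ⟨r, hr⟩ := Ideal.mem_span_singleton.mp (Ideal.Quotient.eq.mp hpq)
  have : aeval N p - aeval N q = aeval N r * N ^ w := by
    rw [← map_sub, hr, mul_comm, map_mul, map_pow, aeval_X]
  rw [← sub_eq_zero, ← sub_mulVec, this, ← mulVec_mulVec, hx, mulVec_zero]

section TaylorPoly

variable {𝕜 : Type*} [NontriviallyNormedField 𝕜]

noncomputable def taylorPoly (f : 𝕜 → 𝕜) (μ : 𝕜) (w : ℕ) : 𝕜[X] :=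
  ∑ j ∈ range w, C (iteratedDeriv j f μ / j !) * X ^ j

theorem coeff_taylorPoly_of_lt {f : 𝕜 → 𝕜} {μ : 𝕜} {w d : ℕ} (hd : d < w) :
    (taylorPoly f μ w).coeff d = iteratedDeriv d f μ / d ! := by
  simp [taylorPoly, hd]

theorem taylorPoly_congr {f g : 𝕜 → 𝕜} {μ : 𝕜} {w : ℕ}
    (h : ∀ j < w, iteratedDeriv j f μ = iteratedDeriv j g μ) :
    taylorPoly f μ w = taylorPoly g μ w :=
  sum_congr rfl fun j hj => by rw [h j (mem_range.mp hj)]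

theorem taylorPoly_add {f g : 𝕜 → 𝕜} {μ : 𝕜} {w : ℕ} (hf : ContDiffAt 𝕜 w f μ)
    (hg : ContDiffAt 𝕜 w g μ) :
    taylorPoly (fun s => f s + g s) μ w = taylorPoly f μ w + taylorPoly g μ w := by
  simp only [taylorPoly, ← sum_add_distrib, ← add_mul, ← C_add, ← add_div]
  refine sum_congr rfl fun j hj => ?_
  have hjw : (j : WithTop ℕ∞) ≤ w := by exact_mod_cast (mem_range.mp hj).le
  rw [iteratedDeriv_fun_add (hf.of_le hjw) (hg.of_le hjw)]

theorem taylorPoly_sum {ι : Type*} (s : Finset ι) {f : ι → 𝕜 → 𝕜} {μ : 𝕜} {w : ℕ}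
    (hf : ∀ i ∈ s, ContDiffAt 𝕜 w (f i) μ) :
    taylorPoly (fun z => ∑ i ∈ s, f i z) μ w = ∑ i ∈ s, taylorPoly (f i) μ w := by
  simp only [taylorPoly]
  rw [sum_comm]
  refine sum_congr rfl fun j hj => ?_
  have hjw : (j : WithTop ℕ∞) ≤ w := by exact_mod_cast (mem_range.mp hj).le
  rw [iteratedDeriv_fun_sum fun i hi => (hf i hi).of_le hjw, sum_div, map_sum, sum_mul]

theorem taylorPoly_const_mul (c : 𝕜) (f : 𝕜 → 𝕜) (μ : 𝕜) (w : ℕ) :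
    taylorPoly (fun s => c * f s) μ w = C c * taylorPoly f μ w := by
  simp only [taylorPoly, iteratedDeriv_const_mul_field, mul_sum, ← mul_assoc, ← C_mul,
    mul_div_assoc]

theorem iteratedDeriv_eval (p : 𝕜[X]) (j : ℕ) :
    iteratedDeriv j (fun s => p.eval s) = fun s => (derivative^[j] p).eval s := by
  induction j with
  | zero => rfl
  | succ j ih =>
    ext s
    rw [iteratedDeriv_succ, ih, Function.iterate_succ_apply']
    exact Polynomial.deriv _

variable [CharZero 𝕜]

theorem modXPow_taylorPoly_mul {f g : 𝕜 → 𝕜} {μ : 𝕜} {w : ℕ} (hf : ContDiffAt 𝕜 w f μ)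
    (hg : ContDiffAt 𝕜 w g μ) :
    modXPow 𝕜 w (taylorPoly (f * g) μ w) = modXPow 𝕜 w (taylorPoly f μ w * taylorPoly g μ w) := by
  refine modXPow_eq_modXPow_iff.mpr fun d hd => ?_
  have hdw : (d : WithTop ℕ∞) ≤ w := by exact_mod_cast hd.le
  rw [coeff_taylorPoly_of_lt hd, coeff_mul, iteratedDeriv_mul (hf.of_le hdw) (hg.of_le hdw),
    sum_div, Nat.sum_antidiagonal_eq_sum_range_succ fun a b =>
      (taylorPoly f μ w).coeff a * (taylorPoly g μ w).coeff b]
  refine sum_congr rfl fun i hi => ?_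
  have hid : i ≤ d := Nat.lt_succ_iff.mp (mem_range.mp hi)
  rw [coeff_taylorPoly_of_lt (hid.trans_lt hd), coeff_taylorPoly_of_lt ((d.sub_le i).trans_lt hd),
    ← Nat.choose_mul_factorial_mul_factorial hid]
  have hchoose : (d.choose i : 𝕜) ≠ 0 := by exact_mod_cast (Nat.choose_pos hid).ne'
  push_cast
  field_simp

theorem modXPow_taylorPoly_eval (p : 𝕜[X]) (μ : 𝕜) (w : ℕ) :
    modXPow 𝕜 w (taylorPoly (fun s => p.eval s) μ w) = modXPow 𝕜 w (taylor μ p) := by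
  refine modXPow_eq_modXPow_iff.mpr fun d hd => ?_
  rw [coeff_taylorPoly_of_lt hd, taylor_coeff, iteratedDeriv_eval, ← factorial_smul_hasseDeriv,
    div_eq_iff (Nat.cast_ne_zero.mpr d.factorial_ne_zero)]
  simp [mul_comm]

end TaylorPoly

section GenEigenvector

variable {R 𝕜 : Type*} [CommRing R] [NontriviallyNormedField 𝕜] {ι : Type*} [Fintype ι]
  [DecidableEq ι]

theorem aeval_sub_smul_one_taylor (M : Matrix ι ι R) (μ : R) (p : R[X]) :
    aeval (M - μ • 1) (taylor μ p) = aeval M p := by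
  simp [taylor_apply, aeval_comp, Algebra.algebraMap_eq_smul_one]

theorem aeval_taylorPoly (N : Matrix ι ι 𝕜) (f : 𝕜 → 𝕜) (μ : 𝕜) (w : ℕ) :
    aeval N (taylorPoly f μ w) = ∑ j ∈ range w, (iteratedDeriv j f μ / j !) • N ^ j := by
  simp [taylorPoly, Algebra.smul_def]

variable [CharZero 𝕜] {M : Matrix ι ι 𝕜} {μ : 𝕜} {w : ℕ} {x : ι → 𝕜}

theorem aeval_taylorPoly_eval_mulVec (hx : ((M - μ • 1) ^ w) *ᵥ x = 0) (p : 𝕜[X]) :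
    aeval (M - μ • 1) (taylorPoly (fun s => p.eval s) μ w) *ᵥ x = aeval M p *ᵥ x := by
  rw [aeval_mulVec_eq_of_modXPow_eq hx (modXPow_taylorPoly_eval p μ w),
    aeval_sub_smul_one_taylor]

theorem pow_mulVec_eq_aeval_taylorPoly (hx : ((M - μ • 1) ^ w) *ᵥ x = 0) (i : ℕ) :
    (M ^ i) *ᵥ x = aeval (M - μ • 1) (taylorPoly (· ^ i) μ w) *ᵥ x := by
  simpa using (aeval_taylorPoly_eval_mulVec hx (X ^ i)).symm

theorem inv_pow_mulVec_eq_aeval_taylorPoly (hx : ((M - μ • 1) ^ w) *ᵥ x = 0) {z : 𝕜}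
    (hz : IsUnit (z • 1 - M)) (hzμ : z ≠ μ) (i : ℕ) :
    ((z • 1 - M)⁻¹ ^ i) *ᵥ x
      = aeval (M - μ • 1) (taylorPoly (fun s => ((z - s) ^ i)⁻¹) μ w) *ᵥ x := by
  set f : 𝕜 → 𝕜 := fun s => ((z - s) ^ i)⁻¹
  set q : 𝕜[X] := (C z - X) ^ i
  have hf : ContDiffAt 𝕜 w f μ :=
    ((contDiffAt_const.sub contDiffAt_id).pow i).inv (pow_ne_zero _ (sub_ne_zero.mpr hzμ))
  have hqf : (fun s => q.eval s) * f =ᶠ[nhds μ] fun s => (1 : 𝕜[X]).eval s := by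
    filter_upwards [eventually_ne_nhds hzμ.symm] with s hs
    simp [q, f, sub_ne_zero.mpr hs.symm]
  have hjet : modXPow 𝕜 w (taylor μ q * taylorPoly f μ w) = modXPow 𝕜 w 1 := by
    rw [map_mul, ← modXPow_taylorPoly_eval, ← map_mul,
      ← modXPow_taylorPoly_mul (by simpa using (q.contDiff_aeval (𝕜 := 𝕜) w).contDiffAt) hf,
      taylorPoly_congr fun j _ => (hqf.iteratedDeriv j).eq_of_nhds, modXPow_taylorPoly_eval,
      taylor_one, C_1]
  have hq : aeval M q = (z • 1 - M) ^ i := by simp [q, Algebra.algebraMap_eq_smul_one]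
  have hinv : ((z • 1 - M)⁻¹ ^ i) * (z • 1 - M) ^ i = 1 := by
    rw [inv_pow', nonsing_inv_mul _ ((isUnit_iff_isUnit_det _).mp (hz.pow i))]
  calc ((z • 1 - M)⁻¹ ^ i) *ᵥ x
      = ((z • 1 - M)⁻¹ ^ i) *ᵥ (aeval (M - μ • 1) (taylor μ q * taylorPoly f μ w) *ᵥ x) := by
        rw [aeval_mulVec_eq_of_modXPow_eq hx hjet, map_one, one_mulVec]
    _ = aeval (M - μ • 1) (taylorPoly f μ w) *ᵥ x := by
        rw [map_mul, ← mulVec_mulVec, aeval_sub_smul_one_taylor, hq, mulVec_mulVec, hinv,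
          one_mulVec]

end GenEigenvector

section Exp

variable {ι : Type*} [Fintype ι] [DecidableEq ι]

theorem exp_mulVec_eq_sum_range {N : Matrix ι ι ℂ} {w : ℕ} {x : ι → ℂ}
    (hx : (N ^ w) *ᵥ x = 0) :
    NormedSpace.exp N *ᵥ x = ∑ j ∈ range w, (j ! : ℂ)⁻¹ • ((N ^ j) *ᵥ x) := by
  let L : Matrix ι ι ℂ →ₗ[ℂ] ι → ℂ :=
    { toFun := (· *ᵥ x), map_add' := (add_mulVec · · x), map_smul' := (smul_mulVec · · x) }
  have hexp : HasSum (fun j => L ((j ! : ℂ)⁻¹ • N ^ j)) (L (NormedSpace.exp N)) := by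
    -- any matrix norm induces the product topology, which is all that `HasSum` sees
    let _ : NormedRing (Matrix ι ι ℂ) := Matrix.linftyOpNormedRing
    let _ : NormedAlgebra ℂ (Matrix ι ι ℂ) := Matrix.linftyOpNormedAlgebra
    exact (NormedSpace.exp_series_hasSum_exp' N).map L
      (LinearMap.continuous_of_finiteDimensional L)
  have hfin : HasSum (fun j => L ((j ! : ℂ)⁻¹ • N ^ j))
      (∑ j ∈ range w, L ((j ! : ℂ)⁻¹ • N ^ j)) := by
    refine hasSum_sum_of_ne_finset_zero fun j hj => ?_
    obtain ⟨d, rfl⟩ := Nat.exists_eq_add_of_le (not_lt.mp (mem_range.not.mp hj))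
    simp [L, add_comm w, pow_add, ← mulVec_mulVec, hx]
  simpa [L] using hexp.unique hfin

theorem Matrix.exp_smul_one (a : ℂ) : NormedSpace.exp (a • (1 : Matrix ι ι ℂ)) = Complex.exp a • 1 := by
  rw [smul_one_eq_diagonal, smul_one_eq_diagonal, exp_diagonal]
  congr 1
  ext
  simp [Complex.exp_eq_exp_ℂ]

theorem exp_smul_mulVec_eq_aeval_taylorPoly {M : Matrix ι ι ℂ} {μ : ℂ} {w : ℕ} {x : ι → ℂ}
    (hx : ((M - μ • 1) ^ w) *ᵥ x = 0) (c : ℂ) :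
    NormedSpace.exp (c • M) *ᵥ x
      = aeval (M - μ • 1) (taylorPoly (fun s => Complex.exp (c * s)) μ w) *ᵥ x := by
  have hsplit : c • M = (c * μ) • 1 + c • (M - μ • 1) := by
    rw [smul_sub, smul_smul]; abel
  have hcx : ((c • (M - μ • 1)) ^ w) *ᵥ x = 0 := by rw [_root_.smul_pow, smul_mulVec, hx, smul_zero]
  rw [hsplit, exp_add_of_commute _ _ ((Commute.one_left _).smul_left _), exp_smul_one,
    smul_mul_assoc, Matrix.one_mul, smul_mulVec, exp_mulVec_eq_sum_range hcx, aeval_taylorPoly,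
    sum_mulVec, smul_sum]
  refine sum_congr rfl fun j _ => ?_
  rw [iteratedDeriv_cexp_const_mul, _root_.smul_pow, smul_mulVec, smul_smul, smul_smul, smul_mulVec]
  ring_nf

end Exp

section PartialFractions

variable {𝕜 : Type*} [NontriviallyNormedField 𝕜] {P : Type*} [Fintype P]
  {ι : Type*} [Fintype ι] [DecidableEq ι]

noncomputable def partialFractionSum (lam : P → 𝕜) (κ₀ : ℕ) (κ : P → ℕ) (g₀ : ℕ → 𝕜)
    (g : P → ℕ → 𝕜) (s : 𝕜) : 𝕜 :=
  (∑ k, ∑ i ∈ Icc 1 (κ k), g k i / (lam k - s) ^ i) + ∑ i ∈ range κ₀, g₀ i * s ^ i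

noncomputable def partialFractionSumMat {R : Type*} [CommRing R] (lam : P → R) (κ₀ : ℕ)
    (κ : P → ℕ) (g₀ : ℕ → R) (g : P → ℕ → R) (M : Matrix ι ι R) : Matrix ι ι R :=
  (∑ k, ∑ j ∈ Icc 1 (κ k), g k j • ((lam k • (1 : Matrix ι ι R) - M)⁻¹) ^ j)
    + ∑ j ∈ range κ₀, g₀ j • M ^ j

variable {lam : P → 𝕜} {κ₀ : ℕ} {κ : P → ℕ} {g₀ : ℕ → 𝕜} {g : P → ℕ → 𝕜}

theorem taylorPoly_partialFractionSum {μ : 𝕜} (hμ : ∀ k, lam k ≠ μ) (w : ℕ) :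
    taylorPoly (partialFractionSum lam κ₀ κ g₀ g) μ w
      = (∑ k, ∑ i ∈ Icc 1 (κ k), C (g k i) * taylorPoly (fun s => ((lam k - s) ^ i)⁻¹) μ w)
        + ∑ i ∈ range κ₀, C (g₀ i) * taylorPoly (· ^ i) μ w := by
  have hpole : ∀ k i, ContDiffAt 𝕜 w (fun s => ((lam k - s) ^ i)⁻¹) μ := fun k i =>
    ((contDiffAt_const.sub contDiffAt_id).pow i).inv (pow_ne_zero _ (sub_ne_zero.mpr (hμ k)))
  have hpoles : ∀ k, ContDiffAt 𝕜 w (fun s => ∑ i ∈ Icc 1 (κ k), g k i * ((lam k - s) ^ i)⁻¹) μ :=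
    fun k => ContDiffAt.sum fun i _ => contDiffAt_const.mul (hpole k i)
  unfold partialFractionSum
  simp only [div_eq_mul_inv]
  rw [taylorPoly_add (ContDiffAt.sum fun k _ => hpoles k) (ContDiffAt.sum fun i _ => by fun_prop),
    taylorPoly_sum _ fun k _ => hpoles k, taylorPoly_sum _ fun i _ => by fun_prop]
  congr 1
  · refine sum_congr rfl fun k _ => ?_
    rw [taylorPoly_sum _ fun i _ => contDiffAt_const.mul (hpole k i)]
    exact sum_congr rfl fun i _ => taylorPoly_const_mul _ _ _ _
  · exact sum_congr rfl fun i _ => taylorPoly_const_mul _ _ _ _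

variable [CharZero 𝕜]

theorem partialFractionSumMat_mulVec_eq_aeval_taylorPoly {M : Matrix ι ι 𝕜} {μ : 𝕜} {w : ℕ}
    {x : ι → 𝕜} (hx : ((M - μ • 1) ^ w) *ᵥ x = 0) (hlam : ∀ k, IsUnit (lam k • 1 - M))
    (hμ : ∀ k, lam k ≠ μ) :
    partialFractionSumMat lam κ₀ κ g₀ g M *ᵥ x
      = aeval (M - μ • 1) (taylorPoly (partialFractionSum lam κ₀ κ g₀ g) μ w) *ᵥ x := by
  simp only [partialFractionSumMat, taylorPoly_partialFractionSum hμ, map_add, map_sum, map_mul,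
    aeval_C, Algebra.algebraMap_eq_smul_one, smul_mul, Matrix.one_mul, add_mulVec, sum_mulVec,
    smul_mulVec, ← inv_pow_mulVec_eq_aeval_taylorPoly hx (hlam _) (hμ _),
    ← pow_mulVec_eq_aeval_taylorPoly hx]

end PartialFractions

theorem Polynomial.iSup_ker_aeval_eq_ker_aeval_prod {R V : Type*} [CommRing R] [AddCommGroup V]
    [Module R V] (f : V →ₗ[R] V) {ι : Type*} [DecidableEq ι] (s : Finset ι) (p : ι → R[X])
    (hp : (s : Set ι).Pairwise (Function.onFun IsCoprime p)) :
    ⨆ i ∈ s, LinearMap.ker (aeval f (p i)) = LinearMap.ker (aeval f (∏ i ∈ s, p i)) := by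
  induction s using Finset.induction_on with
  | empty => simp [Module.End.one_eq_id]
  | insert a s ha ih =>
    rw [coe_insert, Set.pairwise_insert] at hp
    rw [Finset.iSup_insert, prod_insert ha, ih hp.1, sup_ker_aeval_eq_ker_aeval_mul_of_coprime]
    exact IsCoprime.prod_right fun i hi => (hp.2 i hi (ne_of_mem_of_not_mem hi ha).symm).1

section GenEigenspaces

variable {K : Type*} [Field K] [IsAlgClosed K] {ι : Type*} [Fintype ι] [DecidableEq ι]

theorem Matrix.eq_of_mulVec_eq_of_genEigenvector (M A B : Matrix ι ι K)
    (h : ∀ μ, M.charpoly.IsRoot μ → ∀ x, ((M - μ • 1) ^ M.charpoly.rootMultiplicity μ) *ᵥ x = 0 →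
      A *ᵥ x = B *ᵥ x) :
    A = B := by
  classical
  set p : K → K[X] := fun μ => (X - C μ) ^ M.charpoly.rootMultiplicity μ
  have hprod : ∏ μ ∈ M.charpoly.roots.toFinset, p μ = M.charpoly := by
    rw [← prod_multiset_root_eq_finset_root,
      ← (IsAlgClosed.splits M.charpoly).eq_prod_roots_of_monic M.charpoly_monic]
  have hcop : (M.charpoly.roots.toFinset : Set K).Pairwise (Function.onFun IsCoprime p) :=
    fun μ _ ν _ h => (isCoprime_X_sub_C_of_isUnit_sub (sub_ne_zero.mpr h).isUnit).pow
  have hCH : aeval (toLinAlgEquiv' M) M.charpoly = 0 := by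
    rw [← Matrix.charpoly_toLin', ← LinearMap.aeval_self_charpoly (toLin' M)]
    rfl
  have htop := Polynomial.iSup_ker_aeval_eq_ker_aeval_prod (toLinAlgEquiv' M) _ p hcop
  rw [hprod, hCH, LinearMap.ker_zero] at htop
  refine toLinAlgEquiv'.injective (LinearMap.eqLocus_eq_top.mp (eq_top_iff.mpr ?_))
  rw [← htop]
  refine iSup₂_le fun μ hμ x hx => ?_
  rw [LinearMap.mem_ker, aeval_algHom_apply toLinAlgEquiv', toLinAlgEquiv'_apply] at hx
  have hroot : M.charpoly.IsRoot μ :=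
    (mem_roots M.charpoly_monic.ne_zero).mp (Multiset.mem_toFinset.mp hμ)
  simpa [toLinAlgEquiv'_apply] using
    h μ hroot x (by simpa [p, Algebra.algebraMap_eq_smul_one] using hx)

end GenEigenspaces

theorem isUnit_smul_one_sub_of_notMem_spectrum {R ι : Type*} [CommRing R] [Fintype ι]
    [DecidableEq ι] {M : Matrix ι ι R} {z : R} (h : z ∉ spectrum R M) : IsUnit (z • 1 - M) := by
  simpa [Algebra.algebraMap_eq_smul_one] using spectrum.notMem_iff.mp h

theorem partialFractionSumMat_eq_exp_smul {ι P : Type*} [Fintype ι] [DecidableEq ι] [Fintype P]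
    {lam : P → ℂ} {κ₀ : ℕ} {κ : P → ℕ} {g₀ : ℕ → ℂ} {g : P → ℕ → ℂ} {M : Matrix ι ι ℂ} (c : ℂ)
    (hlam : ∀ k, lam k ∉ spectrum ℂ M)
    (hinterp : ∀ μ ∈ spectrum ℂ M, ∀ j < M.charpoly.rootMultiplicity μ,
      iteratedDeriv j (partialFractionSum lam κ₀ κ g₀ g) μ = c ^ j * Complex.exp (c * μ)) :
    partialFractionSumMat lam κ₀ κ g₀ g M = NormedSpace.exp (c • M) := by
  refine eq_of_mulVec_eq_of_genEigenvector M _ _ fun μ hμ x hx => ?_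
  have hμM : μ ∈ spectrum ℂ M := mem_spectrum_of_isRoot_charpoly hμ
  rw [partialFractionSumMat_mulVec_eq_aeval_taylorPoly hx
      (fun k => isUnit_smul_one_sub_of_notMem_spectrum (hlam k)) (fun k h => hlam k (h ▸ hμM)),
    exp_smul_mulVec_eq_aeval_taylorPoly hx, taylorPoly_congr fun j hj => ?_]
  rw [hinterp μ hμM j hj, iteratedDeriv_cexp_const_mul]

section Galerkin

variable {R : Type*} [CommRing R] [StarRing R] {n m : Type*} [Fintype n] [Fintype m]
  [DecidableEq m] {V : Matrix n m R}

theorem mulVec_conjTranspose_mulVec_of_mem_range (hV : Vᴴ * V = 1) {u : n → R}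
    (hu : u ∈ Set.range V.mulVec) : V *ᵥ (Vᴴ *ᵥ u) = u := by
  obtain ⟨y, rfl⟩ := hu
  rw [mulVec_mulVec, mulVec_mulVec, Matrix.mul_assoc, hV, Matrix.mul_one]

theorem conjTranspose_mulVec_mulVec_of_mem_range (hV : Vᴴ * V = 1) (B : Matrix n n R)
    {u : n → R} (hu : u ∈ Set.range V.mulVec) :
    Vᴴ *ᵥ (B *ᵥ u) = (Vᴴ * B * V) *ᵥ (Vᴴ *ᵥ u) := by
  conv_lhs => rw [← mulVec_conjTranspose_mulVec_of_mem_range hV hu]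
  simp only [mulVec_mulVec, Matrix.mul_assoc]

variable [DecidableEq n]

theorem conjTranspose_mulVec_pow_mulVec (hV : Vᴴ * V = 1) (B : Matrix n n R) {b : n → R}
    {k : ℕ} (hb : ∀ i < k, (B ^ i) *ᵥ b ∈ Set.range V.mulVec) :
    ∀ j ≤ k, Vᴴ *ᵥ ((B ^ j) *ᵥ b) = ((Vᴴ * B * V) ^ j) *ᵥ (Vᴴ *ᵥ b) := by
  intro j hj
  induction j with
  | zero => simp
  | succ j ih =>
    rw [pow_succ', ← mulVec_mulVec, conjTranspose_mulVec_mulVec_of_mem_range hV B (hb j hj),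
      ih (Nat.le_of_succ_le hj), mulVec_mulVec, ← pow_succ']

theorem conjTranspose_mulVec_inv_pow_mulVec (hV : Vᴴ * V = 1) {B : Matrix n n R}
    (hB : IsUnit B) (hB' : IsUnit (Vᴴ * B * V)) {b : n → R} {k : ℕ}
    (hb : ∀ i, 1 ≤ i → i ≤ k → (B⁻¹ ^ i) *ᵥ b ∈ Set.range V.mulVec) :
    ∀ j ≤ k, Vᴴ *ᵥ ((B⁻¹ ^ j) *ᵥ b) = ((Vᴴ * B * V)⁻¹ ^ j) *ᵥ (Vᴴ *ᵥ b) := by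
  intro j hj
  induction j with
  | zero => simp
  | succ j ih =>
    have hBB : B *ᵥ ((B⁻¹ ^ (j + 1)) *ᵥ b) = (B⁻¹ ^ j) *ᵥ b := by
      rw [mulVec_mulVec, pow_succ', ← Matrix.mul_assoc,
        mul_nonsing_inv _ ((isUnit_iff_isUnit_det B).mp hB), Matrix.one_mul]
    calc Vᴴ *ᵥ ((B⁻¹ ^ (j + 1)) *ᵥ b)
        = (Vᴴ * B * V)⁻¹ *ᵥ ((Vᴴ * B * V) *ᵥ (Vᴴ *ᵥ ((B⁻¹ ^ (j + 1)) *ᵥ b))) := by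
          rw [mulVec_mulVec _ (Vᴴ * B * V)⁻¹, nonsing_inv_mul _ ((isUnit_iff_isUnit_det _).mp hB'),
            one_mulVec]
      _ = ((Vᴴ * B * V)⁻¹ ^ (j + 1)) *ᵥ (Vᴴ *ᵥ b) := by
          rw [← conjTranspose_mulVec_mulVec_of_mem_range hV B (hb (j + 1) j.succ_pos hj), hBB,
            ih (Nat.le_of_succ_le hj), mulVec_mulVec, ← pow_succ']

variable {P : Type*} [Fintype P] {lam : P → R} {κ₀ : ℕ} {κ : P → ℕ} {g₀ : ℕ → R}
  {g : P → ℕ → R}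

theorem partialFractionSumMat_mulVec_eq_of_mem_range (hV : Vᴴ * V = 1) {A : Matrix n n R}
    {b : n → R} (hA : ∀ k, IsUnit (lam k • 1 - A)) (hA' : ∀ k, IsUnit (lam k • 1 - Vᴴ * A * V))
    (hpow : ∀ j < κ₀, (A ^ j) *ᵥ b ∈ Set.range V.mulVec)
    (hres : ∀ k, ∀ j, 1 ≤ j → j ≤ κ k → ((lam k • 1 - A)⁻¹ ^ j) *ᵥ b ∈ Set.range V.mulVec) :
    partialFractionSumMat lam κ₀ κ g₀ g A *ᵥ b
      = V *ᵥ (partialFractionSumMat lam κ₀ κ g₀ g (Vᴴ * A * V) *ᵥ (Vᴴ *ᵥ b)) := by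
  have hshift : ∀ z : R, Vᴴ * (z • 1 - A) * V = z • 1 - Vᴴ * A * V := fun z => by
    rw [Matrix.mul_sub, Matrix.sub_mul, Matrix.mul_smul, Matrix.smul_mul, Matrix.mul_one, hV]
  have hres' : ∀ k, ∀ j ∈ Icc 1 (κ k), ((lam k • 1 - A)⁻¹ ^ j) *ᵥ b
      = V *ᵥ (((lam k • 1 - Vᴴ * A * V)⁻¹ ^ j) *ᵥ (Vᴴ *ᵥ b)) := fun k j hj => by
    obtain ⟨hj1, hj2⟩ := mem_Icc.mp hj
    rw [← hshift, ← conjTranspose_mulVec_inv_pow_mulVec hV (hA k) (hshift _ ▸ hA' k) (hres k) j hj2,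
      mulVec_conjTranspose_mulVec_of_mem_range hV (hres k j hj1 hj2)]
  have hpow' : ∀ j ∈ range κ₀, (A ^ j) *ᵥ b = V *ᵥ (((Vᴴ * A * V) ^ j) *ᵥ (Vᴴ *ᵥ b)) :=
    fun j hj => by
      rw [← conjTranspose_mulVec_pow_mulVec hV A hpow j (mem_range.mp hj).le,
        mulVec_conjTranspose_mulVec_of_mem_range hV (hpow j (mem_range.mp hj))]
  simp only [partialFractionSumMat, add_mulVec, sum_mulVec, smul_mulVec, mulVec_add, mulVec_sum,
    mulVec_smul]
  congr 1
  · exact sum_congr rfl fun k _ => sum_congr rfl fun j hj => by rw [hres' k j hj]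
  · exact sum_congr rfl fun j hj => by rw [hpow' j hj]

end Galerkin

theorem one_sided_reduced_order_exp_exactness
    {n nh m : ℕ} (A : Matrix (Fin n) (Fin n) ℂ) (b : Fin n → ℂ)
    (V : Matrix (Fin n) (Fin nh) ℂ) (hV : Vᴴ * V = 1)
    (Ah : Matrix (Fin nh) (Fin nh) ℂ) (hAh : Ah = Vᴴ * A * V)
    (lam : Fin m → ℂ)
    (hlamA : ∀ k, lam k ∉ spectrum ℂ A)
    (hlamAh : ∀ k, lam k ∉ spectrum ℂ Ah)
    (κ₀ : ℕ) (κ : Fin m → ℕ)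
    (hVpow : ∀ j < κ₀, (A ^ j).mulVec b ∈ Set.range V.mulVec)
    (hVres : ∀ k : Fin m, ∀ j, 1 ≤ j → j ≤ κ k →
      (((lam k • (1 : Matrix (Fin n) (Fin n) ℂ) - A)⁻¹) ^ j).mulVec b
        ∈ Set.range V.mulVec)
    (t : ℝ) (g₀ : ℕ → ℂ) (g : Fin m → ℕ → ℂ)
    (hinterp : ∀ μ ∈ spectrum ℂ Ah,
      ∀ j < (Matrix.charpoly Ah).rootMultiplicity μ,
        iteratedDeriv j
          (fun w => (∑ k : Fin m, ∑ i ∈ Finset.Icc 1 (κ k),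
              g k i / (lam k - w) ^ i)
            + ∑ i ∈ Finset.range κ₀, g₀ i * w ^ i) μ
        = (t : ℂ) ^ j * Complex.exp ((t : ℂ) * μ)) :
    ((∑ k : Fin m, ∑ j ∈ Finset.Icc 1 (κ k),
        g k j • ((lam k • (1 : Matrix (Fin n) (Fin n) ℂ) - A)⁻¹) ^ j)
      + ∑ j ∈ Finset.range κ₀, g₀ j • A ^ j).mulVec b
    = (V * NormedSpace.exp ((t : ℂ) • Ah)).mulVec (Vᴴ.mulVec b) := by
  subst hAh
  change partialFractionSumMat lam κ₀ κ g₀ g A *ᵥ b = _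
  rw [partialFractionSumMat_mulVec_eq_of_mem_range hV
      (fun k => isUnit_smul_one_sub_of_notMem_spectrum (hlamA k))
      (fun k => isUnit_smul_one_sub_of_notMem_spectrum (hlamAh k)) hVpow hVres,
    partialFractionSumMat_eq_exp_smul (t : ℂ) hlamAh hinterp, mulVec_mulVec]
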